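/- For every integer n ≥ 1, twice the number of Catalan words of length n avoiding the vincular pattern 32-1 equals 3^{n−1} + 1. -/

import Mathlib

/-- A Catalan word: a word of positive integers starting with 1 in which each
letter exceeds its predecessor by at most 1. -/
def IsCatalanWord {n : ℕ} (w : Fin n → ℕ) : Prop :=
  (∀ i, 1 ≤ w i) ∧ (∀ h : 0 < n, w ⟨0, h⟩ = 1) ∧
  ∀ i : ℕ, ∀ h : i + 1 < n, w ⟨i + 1, h⟩ ≤ w ⟨i, by omega⟩ + 1

/-- `w` contains the vincular pattern 32-1: there are indices `i` and `k` with
`i + 1 < k` and `w i > w (i+1) > w k`. -/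
def Contains32_1 {n : ℕ} (w : Fin n → ℕ) : Prop :=
  ∃ i k : ℕ, ∃ hk : k < n, ∃ hik : i + 1 < k,
    w ⟨i + 1, by omega⟩ < w ⟨i, by omega⟩ ∧ w ⟨k, hk⟩ < w ⟨i + 1, by omega⟩


/-!
Let `v` be a Catalan word avoiding 32-1, with last letter `a`, and let `f` be the largest bottom
`v (i + 1) < v i` of a descent of `v` (or `1` if there is none). Appending a letter `b` gives
again an avoiding Catalan word exactly when `f ≤ b ≤ a + 1`. For `b < a` the new last letter is
itself a descent bottom, so the slack `a - f` becomes `0`; for `b = a` and `b = a + 1` the floor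
`f` is unchanged. A word of slack `s` thus has `s + 2` children of total slack `2 s + 1`, so the
number `N` of avoiders and their total slack `S` evolve as `(N, S) ↦ (2 N + S, N + 2 S)`:
`N - S = 1` is preserved and `N + S` triples, whence `2 N = 3 ^ (n - 1) + 1`.
-/

namespace CatalanWord

open Finset

variable {n : ℕ}

@[simp]
lemma snoc_mk_of_lt {α : Type*} (v : Fin n → α) (b : α) {i : ℕ} (h : i < n) (h' : i < n + 1) :
    (Fin.snoc v b : Fin (n + 1) → α) ⟨i, h'⟩ = v ⟨i, h⟩ :=
  Fin.snoc_castSucc (α := fun _ => α) b v ⟨i, h⟩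

@[simp]
lemma snoc_mk_self {α : Type*} (v : Fin n → α) (b : α) (h : n < n + 1) :
    (Fin.snoc v b : Fin (n + 1) → α) ⟨n, h⟩ = b :=
  Fin.snoc_last (α := fun _ => α) b v

lemma isCatalanWord_snoc_iff {v : Fin (n + 1) → ℕ} {b : ℕ} :
    IsCatalanWord (Fin.snoc v b : Fin (n + 1 + 1) → ℕ) ↔
      IsCatalanWord v ∧ 1 ≤ b ∧ b ≤ v (Fin.last n) + 1 := by
  unfold IsCatalanWord
  constructor
  · rintro ⟨hpos, hfirst, hstep⟩
    refine ⟨⟨fun i => ?_, fun h => ?_, fun i h => ?_⟩, ?_, ?_⟩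
    · simpa only [Fin.snoc_castSucc] using hpos i.castSucc
    · simpa (disch := omega) only [snoc_mk_of_lt] using hfirst (Nat.succ_pos _)
    · simpa (disch := omega) only [snoc_mk_of_lt] using hstep i (Nat.lt_succ_of_lt h)
    · simpa only [Fin.snoc_last] using hpos (Fin.last _)
    · have hlast := hstep n (Nat.lt_succ_self _)
      simp (disch := omega) only [snoc_mk_of_lt, snoc_mk_self] at hlast
      exact hlast
  · rintro ⟨⟨hpos, hfirst, hstep⟩, hb, hlast⟩
    refine ⟨fun i => ?_, fun _ => ?_, fun i h => ?_⟩
    · induction i using Fin.lastCases with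
      | last => simpa only [Fin.snoc_last] using hb
      | cast j => simpa only [Fin.snoc_castSucc] using hpos j
    · simpa (disch := omega) only [snoc_mk_of_lt] using hfirst (Nat.succ_pos _)
    rcases Nat.lt_or_ge (i + 1) (n + 1) with hi | hi
    · simpa (disch := omega) only [snoc_mk_of_lt] using hstep i hi
    · obtain rfl : i = n := by omega
      simp (disch := omega) only [snoc_mk_of_lt, snoc_mk_self]
      exact hlast

lemma contains32_1_snoc_iff {v : Fin n → ℕ} {b : ℕ} :
    Contains32_1 (Fin.snoc v b : Fin (n + 1) → ℕ) ↔ Contains32_1 v ∨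
      ∃ i : ℕ, ∃ h : i + 1 < n, v ⟨i + 1, h⟩ < v ⟨i, by omega⟩ ∧ b < v ⟨i + 1, h⟩ := by
  constructor
  · rintro ⟨i, k, hk, hik, hdesc, hlow⟩
    rcases Nat.lt_or_ge k n with hkn | hkn
    · left
      exact ⟨i, k, hkn, hik, by simpa (disch := omega) using hdesc,
        by simpa (disch := omega) using hlow⟩
    · obtain rfl : k = n := by omega
      right
      exact ⟨i, hik, by simpa (disch := omega) using hdesc, by simpa (disch := omega) using hlow⟩
  · rintro (⟨i, k, hk, hik, hdesc, hlow⟩ | ⟨i, h, hdesc, hlow⟩)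
    · exact ⟨i, k, by omega, hik, by simpa (disch := omega) using hdesc,
        by simpa (disch := omega) using hlow⟩
    · exact ⟨i, n, by omega, h, by simpa (disch := omega) using hdesc,
        by simpa (disch := omega) using hlow⟩

def descentFloor (w : Fin (n + 1) → ℕ) : ℕ :=
  1 ⊔ (univ.filter fun i : Fin n => w i.succ < w i.castSucc).sup fun i => w i.succ

lemma descentFloor_le_iff {w : Fin (n + 1) → ℕ} {c : ℕ} :
    descentFloor w ≤ c ↔ 1 ≤ c ∧
      ∀ i : ℕ, ∀ h : i + 1 < n + 1, w ⟨i + 1, h⟩ < w ⟨i, by omega⟩ → w ⟨i + 1, h⟩ ≤ c := by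
  simp only [descentFloor, sup_le_iff, Finset.sup_le_iff, mem_filter, mem_univ, true_and,
    Fin.forall_iff, Fin.succ_mk, Fin.castSucc_mk]
  exact and_congr_right fun _ => forall_congr' fun i =>
    ⟨fun H h => H (by omega), fun H h => H (by omega)⟩

lemma descentFloor_snoc_le_iff {v : Fin (n + 1) → ℕ} {b c : ℕ} :
    descentFloor (Fin.snoc v b : Fin (n + 1 + 1) → ℕ) ≤ c ↔
      descentFloor v ≤ c ∧ (b < v (Fin.last n) → b ≤ c) := by
  rw [descentFloor_le_iff, descentFloor_le_iff]
  constructor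
  · rintro ⟨hc, hbot⟩
    refine ⟨⟨hc, fun i h hdesc => ?_⟩, fun hb => ?_⟩
    · have := hbot i (Nat.lt_succ_of_lt h)
      simp (disch := omega) only [snoc_mk_of_lt] at this
      exact this hdesc
    · have := hbot n (Nat.lt_succ_self _)
      simp (disch := omega) only [snoc_mk_of_lt, snoc_mk_self] at this
      exact this hb
  · rintro ⟨⟨hc, hbot⟩, hb⟩
    refine ⟨hc, fun i h hdesc => ?_⟩
    rcases Nat.lt_or_ge (i + 1) (n + 1) with hi | hi
    · simp (disch := omega) only [snoc_mk_of_lt] at hdesc ⊢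
      exact hbot i hi hdesc
    · obtain rfl : i = n := by omega
      simp (disch := omega) only [snoc_mk_of_lt, snoc_mk_self] at hdesc ⊢
      exact hb hdesc

lemma descentFloor_snoc (v : Fin (n + 1) → ℕ) (b : ℕ) :
    descentFloor (Fin.snoc v b : Fin (n + 1 + 1) → ℕ) =
      if b < v (Fin.last n) then max (descentFloor v) b else descentFloor v := by
  refine eq_of_forall_ge_iff fun c => ?_
  rw [descentFloor_snoc_le_iff]
  split_ifs with hb <;> simp [hb]

-- The letters of a Catalan word of length `n` are at most `n`.
open scoped Classical in
noncomputable def avoiders (n : ℕ) : Finset (Fin n → ℕ) :=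
  (Fintype.piFinset fun _ => range (n + 1)).filter fun w => IsCatalanWord w ∧ ¬ Contains32_1 w

lemma _root_.IsCatalanWord.apply_le {w : Fin n → ℕ} (hw : IsCatalanWord w) (i : ℕ) (h : i < n) :
    w ⟨i, h⟩ ≤ i + 1 := by
  induction i with
  | zero => exact (hw.2.1 h).le
  | succ i ih => exact (hw.2.2 i h).trans (Nat.add_le_add_right (ih (by omega)) 1)

lemma mem_avoiders {w : Fin n → ℕ} : w ∈ avoiders n ↔ IsCatalanWord w ∧ ¬ Contains32_1 w := by
  simp only [avoiders, mem_filter, Fintype.mem_piFinset, mem_range, and_iff_right_iff_imp]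
  rintro ⟨hw, -⟩ i
  exact Nat.lt_succ_of_le ((hw.apply_le i.1 i.2).trans i.2)

lemma coe_avoiders (n : ℕ) :
    (avoiders n : Set (Fin n → ℕ)) = {w | IsCatalanWord w ∧ ¬ Contains32_1 w} :=
  Set.ext fun _ => mem_avoiders

lemma snoc_mem_avoiders_iff {v : Fin (n + 1) → ℕ} {b : ℕ} :
    (Fin.snoc v b : Fin (n + 1 + 1) → ℕ) ∈ avoiders (n + 1 + 1) ↔
      v ∈ avoiders (n + 1) ∧ b ∈ Icc (descentFloor v) (v (Fin.last n) + 1) := by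
  simp only [mem_avoiders, isCatalanWord_snoc_iff, contains32_1_snoc_iff, mem_Icc,
    descentFloor_le_iff, not_or, not_exists, not_and, not_lt]
  tauto

lemma descentFloor_le_last {v : Fin (n + 1) → ℕ} (hv : v ∈ avoiders (n + 1)) :
    descentFloor v ≤ v (Fin.last n) := by
  obtain ⟨⟨hpos, -, -⟩, havoid⟩ := mem_avoiders.mp hv
  refine descentFloor_le_iff.mpr ⟨hpos _, fun i h hdesc => ?_⟩
  rcases Nat.lt_or_ge (i + 1) n with hi | hi
  · by_contra hlow
    exact havoid ⟨i, n, n.lt_succ_self, hi, hdesc, not_le.mp hlow⟩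
  · obtain rfl : i + 1 = n := by omega
    exact le_rfl

lemma sum_avoiders_succ_succ {M : Type*} [AddCommMonoid M] (f : (Fin (n + 1 + 1) → ℕ) → M) :
    ∑ w ∈ avoiders (n + 1 + 1), f w =
      ∑ v ∈ avoiders (n + 1),
        ∑ b ∈ Icc (descentFloor v) (v (Fin.last n) + 1), f (Fin.snoc v b) := by
  rw [sum_sigma']
  refine sum_bij' (fun w _ => ⟨Fin.init w, w (Fin.last _)⟩) (fun p _ => Fin.snoc p.1 p.2)
    (fun w hw => ?_) (fun p hp => ?_) (fun w _ => Fin.snoc_init_self w) (fun p _ => ?_)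
    (fun w _ => by rw [Fin.snoc_init_self])
  · rw [← Fin.snoc_init_self w, snoc_mem_avoiders_iff] at hw
    exact mem_sigma.mpr hw
  · exact snoc_mem_avoiders_iff.mpr (mem_sigma.mp hp)
  · simp only [Fin.init_snoc, Fin.snoc_last]

def slack (w : Fin (n + 1) → ℕ) : ℕ :=
  w (Fin.last n) - descentFloor w

lemma slack_snoc {v : Fin (n + 1) → ℕ} {b : ℕ} (hb : descentFloor v ≤ b) :
    slack (Fin.snoc v b : Fin (n + 1 + 1) → ℕ) =
      if b < v (Fin.last n) then 0 else b - descentFloor v := by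
  rw [slack, descentFloor_snoc, Fin.snoc_last]
  split_ifs <;> omega

lemma sum_Icc_ite_sub {f a : ℕ} (h : f ≤ a) :
    ∑ b ∈ Icc f (a + 1), (if b < a then 0 else b - f) = 2 * (a - f) + 1 := by
  rw [← sum_subset (Icc_subset_Icc_left h)]
  · rw [sum_Icc_succ_top (Nat.le_succ a), Icc_self, sum_singleton]
    simp only [lt_irrefl, if_false, show ¬a + 1 < a by omega]
    omega
  · intro b hb hb'
    simp only [mem_Icc] at hb hb'
    rw [if_pos (by omega)]

lemma card_avoiders_succ_succ :
    #(avoiders (n + 1 + 1)) = ∑ v ∈ avoiders (n + 1), (slack v + 2) := by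
  rw [card_eq_sum_ones, sum_avoiders_succ_succ]
  refine sum_congr rfl fun v hv => ?_
  rw [← card_eq_sum_ones, Nat.card_Icc, slack]
  have := descentFloor_le_last hv
  omega

lemma sum_slack_avoiders_succ_succ :
    ∑ w ∈ avoiders (n + 1 + 1), slack w = ∑ v ∈ avoiders (n + 1), (2 * slack v + 1) := by
  rw [sum_avoiders_succ_succ]
  refine sum_congr rfl fun v hv => ?_
  rw [sum_congr rfl fun b hb => slack_snoc (mem_Icc.mp hb).1,
    sum_Icc_ite_sub (descentFloor_le_last hv), slack]

lemma avoiders_one : avoiders 1 = {fun _ => 1} := by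
  ext w
  rw [mem_avoiders, mem_singleton]
  constructor
  · rintro ⟨⟨-, hfirst, -⟩, -⟩
    funext i
    rw [Subsingleton.elim i 0]
    exact hfirst one_pos
  · rintro rfl
    refine ⟨⟨fun _ => le_rfl, fun _ => rfl, fun i h => by omega⟩, ?_⟩
    rintro ⟨i, k, hk, hik, -⟩
    omega

lemma slack_one : slack (fun _ => 1 : Fin 1 → ℕ) = 0 := by
  simp [slack, descentFloor]

theorem card_avoiders_succ_and_sum_slack (n : ℕ) :
    #(avoiders (n + 1)) = ∑ v ∈ avoiders (n + 1), slack v + 1 ∧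
      #(avoiders (n + 1)) + ∑ v ∈ avoiders (n + 1), slack v = 3 ^ n := by
  induction n with
  | zero => simp [avoiders_one, slack_one]
  | succ n ih =>
    rw [card_avoiders_succ_succ, sum_slack_avoiders_succ_succ, sum_add_distrib, sum_add_distrib,
      sum_const, sum_const, ← mul_sum, pow_succ]
    simp only [smul_eq_mul]
    omega

end CatalanWord

theorem catalan_avoid_32_1 (n : ℕ) (hn : 1 ≤ n) :
    2 * Set.ncard {w : Fin n → ℕ | IsCatalanWord w ∧ ¬ Contains32_1 w} =
      3 ^ (n - 1) + 1 := by
  obtain ⟨m, rfl⟩ := Nat.exists_eq_add_of_le' hn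
  rw [← CatalanWord.coe_avoiders, Set.ncard_coe_finset, Nat.add_sub_cancel]
  have := CatalanWord.card_avoiders_succ_and_sum_slack m
  omega
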